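/- Let A_i, B_i, X_i (i = 1, …, n, n ≥ 1) be bounded linear operators on H, and let f, g : [0,∞) → [0,∞) be continuous functions with f(t)g(t) = t for all t ≥ 0. Then for every ν with 0 < ν < 1 and every real number r ≥ 2·max{ν, 1−ν}, ber(Σ_{i=1}^n A_i* X_i B_i)^r ≤ √2 · n^{r−1} · ber(Σ_{i=1}^n (ν·[B_i* f(|X_i|)² B_i]^{r/(2ν)} + i·(1−ν)·[A_i* g(|X_i*|)² A_i]^{r/(2(1−ν))})), where i denotes the imaginary unit. -/

import Mathlib

/-!
Kittaneh's mixed Schwarz inequality `|⟪X u, v⟫| ≤ ‖f(|X|) u‖ ‖g(|X*|) v‖` bounds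
`|⟪A* X B x, x⟫|` by `√(⟪P x, x⟫ ⟪Q x, x⟫)`, where `P = B* f(|X|)² B` and `Q = A* g(|X*|)² A`.
For a unit vector `x`, weighted AM-GM and the Hölder–McCarthy inequality
`⟪P x, x⟫ ^ s ≤ ⟪P ^ s x, x⟫` (`s ≥ 1`) bound its `r`-th power by
`ν ⟪P ^ (r/2ν) x, x⟫ + (1 - ν) ⟪Q ^ (r/2(1-ν)) x, x⟫`. Summing over `i` costs `n ^ (r - 1)` by
convexity of `t ^ r`, and the two resulting sums are the real part and minus the imaginary part
of `⟪S x, x⟫` for the operator `S` on the right, which costs `√2`.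

Mixed Schwarz follows, as `ε → 0`, from the factorisation
`X = g_ε(|X*|) X f(|X|) + ε (|X*| + ε)⁻¹ X` with `g_ε t = g t / (t + ε)`, since
`‖X* g_ε(|X*|) v‖ ≤ ‖g(|X*|) v‖` and `‖X* (|X*| + ε)⁻¹ v‖ ≤ ‖v‖`. The factorisation rests on the
intertwining `X h(|X|) = h(|X*|) X`, true for polynomials in `X* X` and hence, by Weierstrass
approximation, for continuous `h`.
-/

open scoped NNReal
open ContinuousLinearMap

/-- The Berezin number of an operator `T`, relative to the family `k` of
(normalized reproducing kernel) vectors indexed by `Ω`. -/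
noncomputable def ber {H : Type*} [NormedAddCommGroup H] [InnerProductSpace ℂ H]
    {Ω : Type*} (k : Ω → H) (T : H →L[ℂ] H) : ℝ :=
  ⨆ lam : Ω, ‖(inner ℂ (T (k lam)) (k lam) : ℂ)‖

/-- The absolute value `|T| = (T*T)^(1/2)` of a bounded operator. -/
noncomputable def opAbs {H : Type*} [NormedAddCommGroup H] [InnerProductSpace ℂ H]
    [CompleteSpace H] (T : H →L[ℂ] H) : H →L[ℂ] H :=
  CFC.sqrt (adjoint T * T)

open scoped InnerProductSpace

theorem Real.rpow_add_mul_sub_le_rpow {c t s : ℝ} (hc : 0 ≤ c) (ht : 0 ≤ t) (hs : 1 ≤ s) :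
    c ^ s + s * c ^ (s - 1) * (t - c) ≤ t ^ s := by
  rcases hc.eq_or_lt with rfl | hc
  · rcases hs.eq_or_lt with rfl | hs
    · simp
    · simpa [Real.zero_rpow (by linarith : s ≠ 0), Real.zero_rpow (by linarith : s - 1 ≠ 0)]
        using Real.rpow_nonneg ht s
  · have hb := one_add_mul_self_le_rpow_one_add (by linarith [div_nonneg ht hc.le] :
      -1 ≤ t / c - 1) hs
    rw [add_sub_cancel, Real.div_rpow ht hc.le, le_div_iff₀ (Real.rpow_pos_of_pos hc s)] at hb
    calc c ^ s + s * c ^ (s - 1) * (t - c) = (1 + s * (t / c - 1)) * c ^ s := by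
          rw [Real.rpow_sub_one hc.ne']; field_simp
      _ ≤ t ^ s := hb

theorem Real.mul_rpow_le_add_rpow_div {u w ν p : ℝ} (hu : 0 ≤ u) (hw : 0 ≤ w) (hν : 0 < ν)
    (hν' : ν < 1) : (u * w) ^ p ≤ ν * u ^ (p / ν) + (1 - ν) * w ^ (p / (1 - ν)) := by
  have h1ν : 0 < 1 - ν := by linarith
  calc (u * w) ^ p = (u ^ (p / ν)) ^ ν * (w ^ (p / (1 - ν))) ^ (1 - ν) := by
        rw [← Real.rpow_mul hu, ← Real.rpow_mul hw, div_mul_cancel₀ _ hν.ne',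
          div_mul_cancel₀ _ h1ν.ne', Real.mul_rpow hu hw]
    _ ≤ ν * u ^ (p / ν) + (1 - ν) * w ^ (p / (1 - ν)) :=
        Real.geom_mean_le_arith_mean2_weighted hν.le h1ν.le (by positivity) (by positivity)
          (by ring)

theorem Complex.re_sub_im_le_sqrt_two_mul_norm (z : ℂ) : z.re - z.im ≤ √2 * ‖z‖ := by
  rw [← Real.sqrt_sq (norm_nonneg z), ← Real.sqrt_mul zero_le_two, Complex.sq_norm,
    Complex.normSq_apply]
  exact Real.le_sqrt_of_sq_le (by nlinarith [sq_nonneg (z.re + z.im)])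

theorem NNReal.continuous_add_const_inv {ε : ℝ≥0} (hε : 0 < ε) :
    Continuous fun t : ℝ≥0 => (t + ε)⁻¹ :=
  (continuous_id.add continuous_const).inv₀ fun _ => (add_pos_of_nonneg_of_pos zero_le hε).ne'

section Intertwining

open Polynomial

theorem Polynomial.semiconjBy_aeval {R S : Type*} [CommSemiring R] [Semiring S] [Algebra R S]
    {x a b : S} (h : SemiconjBy x a b) (q : R[X]) : SemiconjBy x (aeval a q) (aeval b q) := by
  simp only [SemiconjBy, aeval_eq_sum_range, Finset.mul_sum, Finset.sum_mul, mul_smul_comm,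
    smul_mul_assoc, (h.pow_right _).eq]

variable {A : Type*} [CStarAlgebra A]

theorem norm_cfc_sub_aeval_le {a : A} (ha : IsSelfAdjoint a) {φ : ℝ → ℝ}
    (hφ : ContinuousOn φ (spectrum ℝ a)) {δ : ℝ} (hδ : 0 ≤ δ) {q : ℝ[X]}
    (hq : ∀ t ∈ spectrum ℝ a, |q.eval t - φ t| ≤ δ) :
    ‖cfc φ a - aeval a q‖ ≤ δ := by
  rw [← cfc_polynomial q a, ← cfc_sub φ q.eval a]
  exact norm_cfc_le hδ fun t ht => by rw [Real.norm_eq_abs, abs_sub_comm]; exact hq t ht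

theorem SemiconjBy.cfc_real {x a b : A} (h : SemiconjBy x a b) (ha : IsSelfAdjoint a)
    (hb : IsSelfAdjoint b) {φ : ℝ → ℝ} (hφ : Continuous φ) :
    SemiconjBy x (cfc φ a) (cfc φ b) := by
  have hσ := (ContinuousFunctionalCalculus.isCompact_spectrum (R := ℝ) a).union
    (ContinuousFunctionalCalculus.isCompact_spectrum (R := ℝ) b)
  obtain ⟨m, hm⟩ := hσ.bddBelow
  obtain ⟨M, hM⟩ := hσ.bddAbove
  refine eq_of_forall_dist_le fun ε hε => ?_
  set δ := ε / (2 * ‖x‖ + 1)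
  have hδ : 0 < δ := by positivity
  obtain ⟨q, hq⟩ := exists_polynomial_near_of_continuousOn m M φ hφ.continuousOn δ hδ
  have hqa := norm_cfc_sub_aeval_le ha hφ.continuousOn hδ.le fun t ht =>
    (hq t ⟨hm (.inl ht), hM (.inl ht)⟩).le
  have hqb := norm_cfc_sub_aeval_le hb hφ.continuousOn hδ.le fun t ht =>
    (hq t ⟨hm (.inr ht), hM (.inr ht)⟩).le
  calc dist (x * cfc φ a) (cfc φ b * x)
      = ‖x * (cfc φ a - aeval a q) - (cfc φ b - aeval b q) * x‖ := by
        rw [dist_eq_norm, mul_sub, sub_mul, (semiconjBy_aeval h q).eq]; abel_nf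
    _ ≤ ‖x‖ * δ + δ * ‖x‖ := by
        grw [norm_sub_le, norm_mul_le, norm_mul_le, hqa, hqb]
    _ ≤ δ * (2 * ‖x‖ + 1) := by linarith
    _ = ε := div_mul_cancel₀ ε (by positivity)

variable [PartialOrder A] [StarOrderedRing A]

theorem SemiconjBy.cfc_nnreal {x a b : A} (h : SemiconjBy x a b) (ha : 0 ≤ a) (hb : 0 ≤ b)
    {φ : ℝ≥0 → ℝ≥0} (hφ : Continuous φ) : SemiconjBy x (cfc φ a) (cfc φ b) := by
  rw [cfc_nnreal_eq_real φ a, cfc_nnreal_eq_real φ b]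
  exact h.cfc_real ha.isSelfAdjoint hb.isSelfAdjoint (by fun_prop)

theorem mul_cfc_abs (x : A) {φ : ℝ≥0 → ℝ≥0} (hφ : Continuous φ) :
    x * cfc φ (CFC.abs x) = cfc φ (CFC.abs (star x)) * x := by
  simp only [CFC.abs, star_star, CFC.sqrt_eq_cfc]
  rw [← cfc_comp φ NNReal.sqrt _, ← cfc_comp φ NNReal.sqrt _]
  exact (SemiconjBy.cfc_nnreal (mul_assoc _ _ _).symm (star_mul_self_nonneg x)
    (mul_star_self_nonneg x) (by fun_prop)).eq

theorem eq_cfc_abs_star_mul_mul_cfc_abs_add_smul (x : A) {f g : ℝ≥0 → ℝ≥0}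
    (hf : Continuous f) (hg : Continuous g) (hfg : ∀ t, f t * g t = t) {ε : ℝ≥0} (hε : 0 < ε) :
    x = cfc (fun t => g t / (t + ε)) (CFC.abs (star x)) * x * cfc f (CFC.abs x)
      + ε • (cfc (fun t => (t + ε)⁻¹) (CFC.abs (star x)) * x) := by
  have he := NNReal.continuous_add_const_inv hε
  have hge : Continuous fun t => g t / (t + ε) := hg.mul he
  have hone : cfc (fun t => g t / (t + ε) * f t + ε * (t + ε)⁻¹) (CFC.abs x) = 1 := by
    rw [← cfc_const_one ℝ≥0 (CFC.abs x)]
    refine cfc_congr fun t _ => ?_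
    rw [div_mul_eq_mul_div, mul_comm (g t), hfg, ← div_eq_mul_inv, ← add_div,
      div_self (add_pos_of_nonneg_of_pos zero_le hε).ne']
  rw [cfc_add _ (fun t => g t / (t + ε) * f t) (fun t => ε * (t + ε)⁻¹)
      (hge.mul hf).continuousOn (continuous_const.mul he).continuousOn,
    cfc_mul _ _ _ hge.continuousOn hf.continuousOn, cfc_const_mul _ _ _ he.continuousOn] at hone
  calc x = x * (cfc (fun t => g t / (t + ε)) (CFC.abs x) * cfc f (CFC.abs x)
        + ε • cfc (fun t => (t + ε)⁻¹) (CFC.abs x)) := by rw [hone, mul_one]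
    _ = _ := by
        rw [mul_add, ← mul_assoc, mul_smul_comm, mul_cfc_abs x hge, mul_cfc_abs x he]

end Intertwining

section HilbertSpace

open RCLike

variable {H : Type*} [NormedAddCommGroup H] [InnerProductSpace ℂ H]

theorem re_inner_apply_le_of_le {S T : H →L[ℂ] H} (h : S ≤ T) (x : H) :
    re ⟪S x, x⟫_ℂ ≤ re ⟪T x, x⟫_ℂ := by
  simpa [sub_apply, inner_sub_left] using ((le_def S T).mp h).re_inner_nonneg_left x

variable [CompleteSpace H]

theorem sum_re_inner_le_sqrt_two_mul_norm_inner {ι : Type*} (s : Finset ι)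
    {P Q : ι → H →L[ℂ] H} (hP : ∀ i, IsSelfAdjoint (P i)) (hQ : ∀ i, IsSelfAdjoint (Q i))
    (α β : ℝ) (x : H) :
    ∑ i ∈ s, (α * re ⟪P i x, x⟫_ℂ + β * re ⟪Q i x, x⟫_ℂ) ≤
      √2 * ‖⟪(∑ i ∈ s, ((α : ℂ) • P i + (Complex.I * (β : ℂ)) • Q i)) x, x⟫_ℂ‖ := by
  have hPx i : (⟪P i x, x⟫_ℂ).im = 0 := (hP i).isSymmetric.im_inner_apply_self x
  have hQx i : (⟪Q i x, x⟫_ℂ).im = 0 := (hQ i).isSymmetric.im_inner_apply_self x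
  refine le_of_eq_of_le ?_ (Complex.re_sub_im_le_sqrt_two_mul_norm _)
  simp [sum_apply, Complex.re_sum, Complex.im_sum, hPx, hQx, Finset.sum_add_distrib, mul_comm]

theorem rpow_re_inner_le_re_inner_rpow {P : H →L[ℂ] H} (hP : 0 ≤ P) {x : H} (hx : ‖x‖ = 1) {s : ℝ}
    (hs : 1 ≤ s) : re ⟪P x, x⟫_ℂ ^ s ≤ re ⟪CFC.rpow P s x, x⟫_ℂ := by
  set c := re ⟪P x, x⟫_ℂ
  have hc : 0 ≤ c := ((nonneg_iff_isPositive P).mp hP).re_inner_nonneg_left x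
  -- `⟪ℓ(P) x, x⟫ = ℓ(c)` for an affine `ℓ`; take for `ℓ` the tangent line of `t ↦ t ^ s` at `c`
  set β := s * c ^ (s - 1)
  have hline : cfc (fun t : ℝ => (c ^ s - β * c) + β * t) P ≤ CFC.rpow P s := by
    change _ ≤ P ^ s
    rw [CFC.rpow_eq_cfc_real hP]
    refine cfc_mono (fun t ht => ?_)
      (hg := (Real.continuous_rpow_const (by linarith)).continuousOn)
    have := Real.rpow_add_mul_sub_le_rpow hc (spectrum_nonneg_of_nonneg hP ht) hs
    linarith
  calc c ^ s = re ⟪cfc (fun t : ℝ => (c ^ s - β * c) + β * t) P x, x⟫_ℂ := by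
        rw [cfc_const_add _ _ P, cfc_const_mul_id β P, Algebra.algebraMap_eq_smul_one, add_apply,
          smul_apply, smul_apply, one_apply_eq_self,
          RCLike.real_smul_eq_coe_smul (K := ℂ), RCLike.real_smul_eq_coe_smul (K := ℂ),
          inner_add_left, inner_smul_real_left, inner_smul_real_left, map_add, RCLike.smul_re,
          RCLike.smul_re, inner_self_eq_norm_sq, hx]
        ring
    _ ≤ re ⟪CFC.rpow P s x, x⟫_ℂ := re_inner_apply_le_of_le hline x

theorem norm_apply_apply_sq_eq_re_inner {D : H →L[ℂ] H} (hD : IsSelfAdjoint D) (B : H →L[ℂ] H)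
    (x : H) :
    ‖D (B x)‖ ^ 2 = re ⟪(adjoint B * D ^ 2 * B) x, x⟫_ℂ := by
  rw [← comp_apply, apply_norm_sq_eq_inner_adjoint_left, adjoint_comp, hD.adjoint_eq, sq]
  rfl

theorem norm_apply_le_of_star_mul_self_le {S T : H →L[ℂ] H} (h : star S * S ≤ star T * T)
    (v : H) : ‖S v‖ ≤ ‖T v‖ := by
  rw [← pow_le_pow_iff_left₀ (norm_nonneg _) (norm_nonneg _) two_ne_zero,
    apply_norm_sq_eq_inner_adjoint_left, apply_norm_sq_eq_inner_adjoint_left]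
  exact re_inner_apply_le_of_le h v

theorem norm_abs_apply (T : H →L[ℂ] H) (v : H) : ‖CFC.abs T v‖ = ‖T v‖ := by
  have h : star (CFC.abs T) * CFC.abs T = star T * T := by
    rw [(CFC.abs_nonneg T).isSelfAdjoint.star_eq, CFC.abs_mul_abs]
  exact le_antisymm (norm_apply_le_of_star_mul_self_le h.le v)
    (norm_apply_le_of_star_mul_self_le h.ge v)

theorem norm_cfc_apply_le {a : H →L[ℂ] H} {p q : ℝ≥0 → ℝ≥0} (hp : Continuous p)
    (hq : Continuous q) (hpq : ∀ t ∈ spectrum ℝ≥0 a, p t ≤ q t) (v : H) :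
    ‖cfc p a v‖ ≤ ‖cfc q a v‖ := by
  refine norm_apply_le_of_star_mul_self_le ?_ v
  rw [(cfc_predicate p a).isSelfAdjoint.star_eq, (cfc_predicate q a).isSelfAdjoint.star_eq,
    ← cfc_mul .., ← cfc_mul ..]
  exact cfc_mono fun t ht => mul_le_mul' (hpq t ht) (hpq t ht)

theorem norm_apply_cfc_abs_apply_le (T : H →L[ℂ] H) {k m : ℝ≥0 → ℝ≥0} (hk : Continuous k)
    (hm : Continuous m) (hkm : ∀ t, t * k t ≤ m t) (v : H) :
    ‖T (cfc k (CFC.abs T) v)‖ ≤ ‖cfc m (CFC.abs T) v‖ := by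
  have hmul : CFC.abs T * cfc k (CFC.abs T) = cfc (fun t => t * k t) (CFC.abs T) := by
    rw [cfc_mul (fun t => t) k _, cfc_id' ℝ≥0 (CFC.abs T)]
  rw [← norm_abs_apply, ← mul_apply_eq_comp, hmul]
  exact norm_cfc_apply_le (by fun_prop) hm (fun t _ => hkm t) v

theorem norm_inner_apply_le_mixed_schwarz_add_mul (X : H →L[ℂ] H) {f g : ℝ≥0 → ℝ≥0}
    (hf : Continuous f) (hg : Continuous g) (hfg : ∀ t, f t * g t = t) {ε : ℝ≥0} (hε : 0 < ε)
    (u v : H) :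
    ‖⟪X u, v⟫_ℂ‖ ≤
      ‖cfc f (CFC.abs X) u‖ * ‖cfc g (CFC.abs (adjoint X)) v‖ + ε * (‖u‖ * ‖v‖) := by
  have he := NNReal.continuous_add_const_inv hε
  have hge : Continuous fun t => g t / (t + ε) := hg.mul he
  set C := cfc (fun t => g t / (t + ε)) (CFC.abs (adjoint X))
  set D := cfc (fun t => (t + ε)⁻¹) (CFC.abs (adjoint X))
  have hC : ‖adjoint X (C v)‖ ≤ ‖cfc g (CFC.abs (adjoint X)) v‖ :=
    norm_apply_cfc_abs_apply_le _ hge hg (fun t => by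
      rw [mul_div_left_comm]
      exact mul_le_of_le_one_right zero_le (div_le_one_of_le₀ le_self_add zero_le)) v
  have hD : ‖adjoint X (D v)‖ ≤ ‖v‖ := by
    have := norm_apply_cfc_abs_apply_le (adjoint X) he continuous_const (m := fun _ => 1)
      (fun t => by rw [← div_eq_mul_inv]; exact div_le_one_of_le₀ le_self_add zero_le) v
    rwa [cfc_const_one ℝ≥0 (CFC.abs (adjoint X)), one_apply_eq_self] at this
  have hX := eq_cfc_abs_star_mul_mul_cfc_abs_add_smul X hf hg hfg hε
  rw [star_eq_adjoint] at hX
  have hsplit : ⟪X u, v⟫_ℂ = ⟪cfc f (CFC.abs X) u, adjoint X (C v)⟫_ℂ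
      + (ε : ℝ) • ⟪u, adjoint X (D v)⟫_ℂ := by
    conv_lhs => rw [hX]
    rw [add_apply, inner_add_left, smul_apply, NNReal.smul_def, mul_apply_eq_comp,
      mul_apply_eq_comp, mul_apply_eq_comp, RCLike.real_smul_eq_coe_smul (K := ℂ),
      inner_smul_real_left, ← adjoint_inner_right C, ← adjoint_inner_right D,
      ← adjoint_inner_right X, ← adjoint_inner_right X,
      (cfc_predicate _ _ : 0 ≤ C).isSelfAdjoint.adjoint_eq,
      (cfc_predicate _ _ : 0 ≤ D).isSelfAdjoint.adjoint_eq]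
  rw [hsplit]
  grw [norm_add_le, norm_smul, norm_inner_le_norm, norm_inner_le_norm, hC, hD]
  simp

theorem norm_inner_apply_le_mixed_schwarz (X : H →L[ℂ] H) {f g : ℝ≥0 → ℝ≥0}
    (hf : Continuous f) (hg : Continuous g) (hfg : ∀ t, f t * g t = t) (u v : H) :
    ‖⟪X u, v⟫_ℂ‖ ≤ ‖cfc f (CFC.abs X) u‖ * ‖cfc g (CFC.abs (adjoint X)) v‖ := by
  set c := ‖cfc f (CFC.abs X) u‖ * ‖cfc g (CFC.abs (adjoint X)) v‖
  have hlim : Filter.Tendsto (fun ε : ℝ≥0 => c + ε * (‖u‖ * ‖v‖))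
      (nhdsWithin 0 (Set.Ioi 0)) (nhds c) := by
    have : Continuous fun ε : ℝ≥0 => c + ε * (‖u‖ * ‖v‖) := by fun_prop
    simpa using (this.tendsto 0).mono_left nhdsWithin_le_nhds
  exact ge_of_tendsto hlim (eventually_nhdsWithin_of_forall fun ε hε =>
    norm_inner_apply_le_mixed_schwarz_add_mul X hf hg hfg hε u v)

theorem norm_inner_adjoint_mul_mul_apply_rpow_le (A B X : H →L[ℂ] H) {f g : ℝ≥0 → ℝ≥0}
    (hf : Continuous f) (hg : Continuous g) (hfg : ∀ t, f t * g t = t) {ν r : ℝ} (hν : 0 < ν)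
    (hν' : ν < 1) (hr : 2 * max ν (1 - ν) ≤ r) {x : H} (hx : ‖x‖ = 1) :
    ‖⟪(adjoint A * X * B) x, x⟫_ℂ‖ ^ r ≤
      ν * re ⟪CFC.rpow (adjoint B * cfc f (opAbs X) ^ 2 * B) (r / (2 * ν)) x, x⟫_ℂ
        + (1 - ν) * re ⟪CFC.rpow (adjoint A * cfc g (opAbs (adjoint X)) ^ 2 * A)
            (r / (2 * (1 - ν))) x, x⟫_ℂ := by
  have hr0 : 0 ≤ r := by linarith [le_max_left ν (1 - ν)]
  have hs : 1 ≤ r / (2 * ν) :=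
    (one_le_div (by positivity)).mpr (by linarith [le_max_left ν (1 - ν)])
  have ht : 1 ≤ r / (2 * (1 - ν)) :=
    (one_le_div (by linarith)).mpr (by linarith [le_max_right ν (1 - ν)])
  have hF : 0 ≤ cfc f (opAbs X) := cfc_predicate _ _
  have hG : 0 ≤ cfc g (opAbs (adjoint X)) := cfc_predicate _ _
  have hP : 0 ≤ adjoint B * cfc f (opAbs X) ^ 2 * B :=
    star_left_conjugate_nonneg hF.isSelfAdjoint.sq_nonneg B
  have hQ : 0 ≤ adjoint A * cfc g (opAbs (adjoint X)) ^ 2 * A :=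
    star_left_conjugate_nonneg hG.isSelfAdjoint.sq_nonneg A
  calc ‖⟪(adjoint A * X * B) x, x⟫_ℂ‖ ^ r
      ≤ (‖cfc f (opAbs X) (B x)‖ * ‖cfc g (opAbs (adjoint X)) (A x)‖) ^ r := by
        gcongr
        rw [mul_apply_eq_comp, mul_apply_eq_comp, adjoint_inner_left]
        exact norm_inner_apply_le_mixed_schwarz X hf hg hfg _ _
    _ = (‖cfc f (opAbs X) (B x)‖ ^ 2 * ‖cfc g (opAbs (adjoint X)) (A x)‖ ^ 2) ^ (r / 2) := by
        rw [← mul_pow, ← Real.rpow_natCast, ← Real.rpow_mul (by positivity)]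
        congr 1
        push_cast
        ring
    _ ≤ _ := Real.mul_rpow_le_add_rpow_div (by positivity) (by positivity) hν hν'
    _ ≤ _ := by
        rw [div_div, div_div, norm_apply_apply_sq_eq_re_inner hF.isSelfAdjoint,
          norm_apply_apply_sq_eq_re_inner hG.isSelfAdjoint]
        gcongr
        · exact rpow_re_inner_le_re_inner_rpow hP hx hs
        · exact rpow_re_inner_le_re_inner_rpow hQ hx ht

end HilbertSpace

section Berezin

variable {H : Type*} [NormedAddCommGroup H] [InnerProductSpace ℂ H] {Ω : Type*}

theorem ber_nonneg (k : Ω → H) (T : H →L[ℂ] H) : 0 ≤ ber k T :=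
  Real.iSup_nonneg fun _ => norm_nonneg _

theorem norm_inner_le_ber {k : Ω → H} (hk : ∀ lam, ‖k lam‖ ≤ 1) (T : H →L[ℂ] H) (lam : Ω) :
    ‖⟪T (k lam), k lam⟫_ℂ‖ ≤ ber k T := by
  refine le_ciSup (f := fun lam => ‖⟪T (k lam), k lam⟫_ℂ‖)
    ⟨‖T‖, Set.forall_mem_range.2 fun lam' => ?_⟩ lam
  calc ‖⟪T (k lam'), k lam'⟫_ℂ‖ ≤ ‖T (k lam')‖ * ‖k lam'‖ := norm_inner_le_norm _ _
    _ ≤ ‖T‖ * 1 * 1 := by gcongr; exacts [T.le_opNorm_of_le (hk lam'), hk lam']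
    _ = ‖T‖ := by ring

theorem ber_rpow_le {k : Ω → H} {T : H →L[ℂ] H} {r M : ℝ} (hr : 0 < r) (hM : 0 ≤ M)
    (h : ∀ lam, ‖⟪T (k lam), k lam⟫_ℂ‖ ^ r ≤ M) : ber k T ^ r ≤ M := by
  rw [← Real.le_rpow_inv_iff_of_pos (ber_nonneg k T) hM hr]
  exact Real.iSup_le (fun lam => (Real.le_rpow_inv_iff_of_pos (norm_nonneg _) hM hr).2 (h lam))
    (by positivity)

end Berezin

theorem berezin_power_inequality_triple_products_general
    {H : Type*} [NormedAddCommGroup H] [InnerProductSpace ℂ H] [CompleteSpace H]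
    {Ω : Type*} (k : Ω → H) (hk : ∀ lam, ‖k lam‖ = 1)
    (n : ℕ) (A B X : Fin n → (H →L[ℂ] H))
    (f g : ℝ≥0 → ℝ≥0) (hf : Continuous f) (hg : Continuous g)
    (hfg : ∀ t : ℝ≥0, f t * g t = t)
    (ν : ℝ) (hν : 0 < ν) (hν' : ν < 1) (r : ℝ) (hr : 2 * max ν (1 - ν) ≤ r) :
    ber k (∑ i, adjoint (A i) * X i * B i) ^ r ≤
      Real.sqrt 2 * (n : ℝ) ^ (r - 1)
        * ber k (∑ i,
            ((ν : ℂ) • CFC.rpow (adjoint (B i) * cfc f (opAbs (X i)) ^ 2 * B i)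
                (r / (2 * ν))
              + (Complex.I * ((1 - ν : ℝ) : ℂ)) •
                  CFC.rpow (adjoint (A i) * cfc g (opAbs (adjoint (X i))) ^ 2 * A i)
                    (r / (2 * (1 - ν))))) := by
  have hr1 : 1 ≤ r := by linarith [le_max_left ν (1 - ν), le_max_right ν (1 - ν)]
  refine ber_rpow_le (by linarith) (mul_nonneg (by positivity) (ber_nonneg _ _)) fun lam => ?_
  calc ‖⟪(∑ i, adjoint (A i) * X i * B i) (k lam), k lam⟫_ℂ‖ ^ r
      ≤ (∑ i, ‖⟪(adjoint (A i) * X i * B i) (k lam), k lam⟫_ℂ‖) ^ r := by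
        gcongr
        rw [sum_apply, sum_inner]
        exact norm_sum_le _ _
    _ ≤ (n : ℝ) ^ (r - 1) * ∑ i, ‖⟪(adjoint (A i) * X i * B i) (k lam), k lam⟫_ℂ‖ ^ r := by
        simpa using Real.rpow_sum_le_const_mul_sum_rpow_of_nonneg (Finset.univ : Finset (Fin n))
          hr1 fun i _ => norm_nonneg _
    _ ≤ (n : ℝ) ^ (r - 1) * ∑ i : Fin n, _ := mul_le_mul_of_nonneg_left
        (Finset.sum_le_sum fun i _ =>
          norm_inner_adjoint_mul_mul_apply_rpow_le _ _ _ hf hg hfg hν hν' hr (hk lam))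
        (by positivity)
    _ ≤ (n : ℝ) ^ (r - 1) * (√2 * _) := mul_le_mul_of_nonneg_left
        (sum_re_inner_le_sqrt_two_mul_norm_inner _ (fun _ => CFC.rpow_nonneg.isSelfAdjoint)
          (fun _ => CFC.rpow_nonneg.isSelfAdjoint) ν (1 - ν) (k lam)) (by positivity)
    _ ≤ _ := by
        rw [← mul_assoc, mul_comm ((n : ℝ) ^ (r - 1))]
        gcongr
        exact norm_inner_le_ber (fun lam => (hk lam).le) _ lam

theorem berezin_power_inequality_triple_products
    {H : Type*} [NormedAddCommGroup H] [InnerProductSpace ℂ H] [CompleteSpace H]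
    {Ω : Type*} [Nonempty Ω] (k : Ω → H) (hk : ∀ lam, ‖k lam‖ = 1)
    (n : ℕ) (hn : 1 ≤ n) (A B X : Fin n → (H →L[ℂ] H))
    (f g : ℝ≥0 → ℝ≥0) (hf : Continuous f) (hg : Continuous g)
    (hfg : ∀ t : ℝ≥0, f t * g t = t)
    (ν : ℝ) (hν : 0 < ν) (hν' : ν < 1) (r : ℝ) (hr : 2 * max ν (1 - ν) ≤ r) :
    ber k (∑ i, adjoint (A i) * X i * B i) ^ r ≤
      Real.sqrt 2 * (n : ℝ) ^ (r - 1)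
        * ber k (∑ i,
            ((ν : ℂ) • CFC.rpow (adjoint (B i) * cfc f (opAbs (X i)) ^ 2 * B i)
                (r / (2 * ν))
              + (Complex.I * ((1 - ν : ℝ) : ℂ)) •
                  CFC.rpow (adjoint (A i) * cfc g (opAbs (adjoint (X i))) ^ 2 * A i)
                    (r / (2 * (1 - ν))))) :=
  berezin_power_inequality_triple_products_general k hk n A B X f g hf hg hfg ν hν hν' r hr
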